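/- For 0 ≤ s ≤ 1 let J_s = s |Φ_00⟩⟨Φ_00| + ((1−s)/4) I₄ be the Choi state of the qubit depolarising channel, and for 0 ≤ q ≤ 1 let K_q = ((1+q)/2) |Φ_00⟩⟨Φ_00| + ((1−q)/2) |Φ_01⟩⟨Φ_01| be the Choi state of the qubit dephasing channel. Then K_q lies in the convex hull of { (U ⊗ V) J_s (U ⊗ V)† : U, V ∈ U(2) } (an allowed operation maps the depolarising channel D^pol_s to the dephasing channel D^ph_q) if and only if s = 1; in particular, no nontrivial depolarising channel can be mapped to any dephasing channel by an allowed operation. -/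

import Mathlib

open Matrix Kronecker

noncomputable section

/-- The qubit discrete Weyl operators `W_nm = Σ_c (−1)^{mc} |n+c⟩⟨c|`. -/
def Wq (n m : ZMod 2) : Matrix (ZMod 2) (ZMod 2) ℂ :=
  Matrix.of fun r c => if r = n + c then (-1 : ℂ) ^ (m.val * c.val) else 0

/-- The qubit Bell basis vector `|Φ_nm⟩ = (I ⊗ W_nm)|Φ_00⟩`. -/
def bell (n m : ZMod 2) : ZMod 2 × ZMod 2 → ℂ :=
  fun p => ((Real.sqrt 2 : ℝ) : ℂ)⁻¹ * Wq n m p.2 p.1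

/-- The Bell projector `|Φ_nm⟩⟨Φ_nm|`. -/
def bellProj (n m : ZMod 2) : Matrix (ZMod 2 × ZMod 2) (ZMod 2 × ZMod 2) ℂ :=
  Matrix.of fun p q => bell n m p * (starRingEnd ℂ) (bell n m q)

/-- The set `{ (U ⊗ V) J (U ⊗ V)† : U, V ∈ U(2) }`. -/
def allowedSet (J : Matrix (ZMod 2 × ZMod 2) (ZMod 2 × ZMod 2) ℂ) :
    Set (Matrix (ZMod 2 × ZMod 2) (ZMod 2 × ZMod 2) ℂ) :=
  { K | ∃ U ∈ Matrix.unitaryGroup (ZMod 2) ℂ, ∃ V ∈ Matrix.unitaryGroup (ZMod 2) ℂ,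
      K = (U ⊗ₖ V) * J * (U ⊗ₖ V)ᴴ }

/-- The Choi state `J_s = s |Φ_00⟩⟨Φ_00| + ((1−s)/4) I₄` of the qubit depolarising
channel `D^pol_s`. -/
def Jdep (s : ℝ) : Matrix (ZMod 2 × ZMod 2) (ZMod 2 × ZMod 2) ℂ :=
  s • bellProj 0 0 + ((1 - s) / 4) • (1 : Matrix (ZMod 2 × ZMod 2) (ZMod 2 × ZMod 2) ℂ)

/-- The Choi state `K_q = ((1+q)/2)|Φ_00⟩⟨Φ_00| + ((1−q)/2)|Φ_01⟩⟨Φ_01|` of the qubit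
dephasing channel `D^ph_q`. -/
def Kdeph (q : ℝ) : Matrix (ZMod 2 × ZMod 2) (ZMod 2 × ZMod 2) ℂ :=
  ((1 + q) / 2) • bellProj 0 0 + ((1 - q) / 2) • bellProj 0 1

/-! The real functional `M ↦ Re ⟨Φ_10|M|Φ_10⟩` separates: on `(U ⊗ V) J_s (U ⊗ V)†` it equals
`s ⟨Φ_10|(U ⊗ V)|Φ_00⟩⟨Φ_00|(U ⊗ V)†|Φ_10⟩ + (1 − s)/4 ≥ (1 − s)/4`, hence it is at least
`(1 − s)/4` on the whole convex hull, while it vanishes on `K_q`, which is supported on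
`Φ_00` and `Φ_01`. Conversely `J_1 = |Φ_00⟩⟨Φ_00|`, and `K_q` is a convex combination of
`|Φ_00⟩⟨Φ_00|` and its conjugate `|Φ_01⟩⟨Φ_01|` by `I ⊗ W_01`. -/

open scoped ComplexOrder

section QuadraticForm

variable {ι : Type*} [Fintype ι]

def reExpectation (v : ι → ℂ) : Matrix ι ι ℂ →ₗ[ℝ] ℝ where
  toFun M := (star v ⬝ᵥ M *ᵥ v).re
  map_add' M N := by simp [add_mulVec, dotProduct_add]
  map_smul' c M := by simp [smul_mulVec, dotProduct_smul]

lemma reExpectation_apply (v : ι → ℂ) (M : Matrix ι ι ℂ) :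
    reExpectation v M = (star v ⬝ᵥ M *ᵥ v).re := rfl

lemma Matrix.PosSemidef.reExpectation_nonneg {M : Matrix ι ι ℂ} (hM : M.PosSemidef)
    (v : ι → ℂ) : 0 ≤ reExpectation v M :=
  (Complex.le_def.1 (hM.dotProduct_mulVec_nonneg v)).1

lemma reExpectation_vecMulVec (v w : ι → ℂ) :
    reExpectation v (vecMulVec w (star w)) = Complex.normSq (star v ⬝ᵥ w) := by
  have hconj : star w ⬝ᵥ v = starRingEnd ℂ (star v ⬝ᵥ w) := by
    rw [← Complex.star_def, star_dotProduct]
  rw [reExpectation_apply, vecMulVec_mulVec, op_smul_eq_smul, dotProduct_smul, smul_eq_mul,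
    hconj, mul_comm, Complex.mul_conj, Complex.ofReal_re]

lemma mul_vecMulVec_star_mul_conjTranspose {R : Type*} [NonUnitalSemiring R] [StarRing R]
    (A : Matrix ι ι R) (u : ι → R) :
    A * vecMulVec u (star u) * Aᴴ = vecMulVec (A *ᵥ u) (star (A *ᵥ u)) := by
  rw [mul_vecMulVec, vecMulVec_mul, star_mulVec]

variable [DecidableEq ι]

lemma reExpectation_one (v : ι → ℂ) : reExpectation v 1 = (star v ⬝ᵥ v).re := by
  rw [reExpectation_apply, one_mulVec]

lemma unitary_conj_smul_add_smul_one {U : Matrix ι ι ℂ} (hU : U ∈ unitaryGroup ι ℂ)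
    (P : Matrix ι ι ℂ) (a b : ℝ) :
    U * (a • P + b • 1) * Uᴴ = a • (U * P * Uᴴ) + b • 1 := by
  rw [Matrix.mul_add, Matrix.add_mul, Matrix.mul_smul, Matrix.smul_mul, Matrix.mul_smul,
    Matrix.smul_mul, Matrix.mul_one, ← star_eq_conjTranspose, Unitary.mul_star_self_of_mem hU]

end QuadraticForm

section BellBasis

lemma sum_zmod_two {M : Type*} [AddCommMonoid M] (f : ZMod 2 → M) : ∑ x, f x = f 0 + f 1 :=
  Fin.sum_univ_two f

lemma zmod_two_cases : ∀ x : ZMod 2, x = 0 ∨ x = 1 := by decide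

lemma star_bell_dotProduct_bell (n m n' m' : ZMod 2) :
    star (bell n m) ⬝ᵥ bell n' m' = if n = n' ∧ m = m' then 1 else 0 := by
  have hsqrt : ((Real.sqrt 2 : ℝ) : ℂ)⁻¹ * ((Real.sqrt 2 : ℝ) : ℂ)⁻¹ = 1 / 2 := by
    rw [← mul_inv, ← Complex.ofReal_mul, Real.mul_self_sqrt zero_le_two]
    norm_num
  simp only [dotProduct, Fintype.sum_prod_type, sum_zmod_two]
  rcases zmod_two_cases n with rfl | rfl <;> rcases zmod_two_cases m with rfl | rfl <;>
    rcases zmod_two_cases n' with rfl | rfl <;> rcases zmod_two_cases m' with rfl | rfl <;>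
    simp +decide [bell, Wq, hsqrt] <;> norm_num

lemma Wq_mem_unitaryGroup (n m : ZMod 2) : Wq n m ∈ unitaryGroup (ZMod 2) ℂ := by
  rw [mem_unitaryGroup_iff, star_eq_conjTranspose]
  ext i j
  simp only [mul_apply, sum_zmod_two]
  rcases zmod_two_cases n with rfl | rfl <;> rcases zmod_two_cases m with rfl | rfl <;>
    rcases zmod_two_cases i with rfl | rfl <;> rcases zmod_two_cases j with rfl | rfl <;>
    simp +decide [Wq]

lemma bell_eq_kronecker_mulVec (n m : ZMod 2) : bell n m = (1 ⊗ₖ Wq n m) *ᵥ bell 0 0 := by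
  ext ⟨a, b⟩
  simp only [mulVec, dotProduct, Fintype.sum_prod_type, sum_zmod_two]
  rcases zmod_two_cases n with rfl | rfl <;> rcases zmod_two_cases m with rfl | rfl <;>
    rcases zmod_two_cases a with rfl | rfl <;> rcases zmod_two_cases b with rfl | rfl <;>
    simp +decide [bell, Wq]

lemma bellProj_eq_vecMulVec (n m : ZMod 2) :
    bellProj n m = vecMulVec (bell n m) (star (bell n m)) := rfl

lemma posSemidef_bellProj (n m : ZMod 2) : (bellProj n m).PosSemidef :=
  bellProj_eq_vecMulVec n m ▸ posSemidef_vecMulVec_self_star _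

lemma bellProj_mem_allowedSet (n m : ZMod 2) : bellProj n m ∈ allowedSet (bellProj 0 0) :=
  ⟨1, one_mem _, Wq n m, Wq_mem_unitaryGroup n m, by
    rw [bellProj_eq_vecMulVec, bellProj_eq_vecMulVec, mul_vecMulVec_star_mul_conjTranspose,
      ← bell_eq_kronecker_mulVec]⟩

lemma reExpectation_bellProj (n m n' m' : ZMod 2) :
    reExpectation (bell n m) (bellProj n' m') = if n = n' ∧ m = m' then 1 else 0 := by
  rw [bellProj_eq_vecMulVec, reExpectation_vecMulVec, star_bell_dotProduct_bell]
  split_ifs <;> simp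

end BellBasis

lemma Jdep_one : Jdep 1 = bellProj 0 0 := by
  simp [Jdep]

lemma Kdeph_mem_convexHull_allowedSet_bellProj {q : ℝ} (hq0 : 0 ≤ q) (hq1 : q ≤ 1) :
    Kdeph q ∈ convexHull ℝ (allowedSet (bellProj 0 0)) :=
  convex_convexHull ℝ _ (subset_convexHull ℝ _ (bellProj_mem_allowedSet 0 0))
    (subset_convexHull ℝ _ (bellProj_mem_allowedSet 0 1)) (by linarith) (by linarith)
    (by ring)

lemma reExpectation_bell_one_zero_Kdeph (q : ℝ) : reExpectation (bell 1 0) (Kdeph q) = 0 := by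
  simp [Kdeph, reExpectation_bellProj]

lemma le_reExpectation_of_mem_allowedSet_Jdep {s : ℝ} (hs : 0 ≤ s) {v : ZMod 2 × ZMod 2 → ℂ}
    (hv : star v ⬝ᵥ v = 1) {M : Matrix (ZMod 2 × ZMod 2) (ZMod 2 × ZMod 2) ℂ}
    (hM : M ∈ allowedSet (Jdep s)) : (1 - s) / 4 ≤ reExpectation v M := by
  obtain ⟨U, hU, V, hV, rfl⟩ := hM
  have hUV : U ⊗ₖ V ∈ unitaryGroup (ZMod 2 × ZMod 2) ℂ := kronecker_mem_unitary hU hV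
  have hpos : 0 ≤ reExpectation v ((U ⊗ₖ V) * bellProj 0 0 * (U ⊗ₖ V)ᴴ) :=
    ((posSemidef_bellProj 0 0).mul_mul_conjTranspose_same _).reExpectation_nonneg v
  rw [Jdep, unitary_conj_smul_add_smul_one hUV, map_add, map_smul, map_smul, reExpectation_one,
    hv, smul_eq_mul, smul_eq_mul, Complex.one_re, mul_one]
  exact le_add_of_nonneg_left (mul_nonneg hs hpos)

lemma convexHull_allowedSet_Jdep_subset {s : ℝ} (hs : 0 ≤ s) {v : ZMod 2 × ZMod 2 → ℂ}
    (hv : star v ⬝ᵥ v = 1) :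
    convexHull ℝ (allowedSet (Jdep s)) ⊆ {M | (1 - s) / 4 ≤ reExpectation v M} :=
  convexHull_min (fun _ hM => le_reExpectation_of_mem_allowedSet_Jdep hs hv hM)
    (convex_halfSpace_ge (reExpectation v).isLinear _)

/-- An allowed operation maps the qubit depolarising channel `D^pol_s` to the
dephasing channel `D^ph_q` if and only if `s = 1`: no nontrivial depolarising
channel can be mapped to any dephasing channel. -/
theorem depolarising_to_dephasing (s q : ℝ)
    (hs0 : 0 ≤ s) (hs1 : s ≤ 1) (hq0 : 0 ≤ q) (hq1 : q ≤ 1) :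
    Kdeph q ∈ convexHull ℝ (allowedSet (Jdep s)) ↔ s = 1 := by
  constructor
  · intro hK
    have hv : star (bell 1 0) ⬝ᵥ bell 1 0 = 1 := by simp [star_bell_dotProduct_bell]
    have hbound : (1 - s) / 4 ≤ reExpectation (bell 1 0) (Kdeph q) :=
      convexHull_allowedSet_Jdep_subset hs0 hv hK
    rw [reExpectation_bell_one_zero_Kdeph] at hbound
    linarith
  · rintro rfl
    rw [Jdep_one]
    exact Kdeph_mem_convexHull_allowedSet_bellProj hq0 hq1

end
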